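/- arXiv:1304.0051 — 3 statements merged into one kernel-verified Lean document; each statement's English description precedes it below -/
import Mathlib

section
/- Let A and C be bounded self-adjoint operators on a Hilbert space with 0 ≤ A, 0 ≤ C, and A² ≤ C². Then A ≤ C. -/
theorem CStarAlgebra.le_of_sq_le_sq {A : Type*} [CStarAlgebra A] [PartialOrder A]
    [StarOrderedRing A] {a c : A} (ha : 0 ≤ a) (hc : 0 ≤ c) (h : a ^ 2 ≤ c ^ 2) : a ≤ c := by
  simpa only [CFC.sqrt_sq a ha, CFC.sqrt_sq c hc] using CFC.sqrt_le_sqrt _ _ h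

/-- Löwner–Heinz for exponent `1/2` on bounded operators: if `A, C` are positive
bounded self-adjoint operators on a Hilbert space with `A² ≤ C²`, then `A ≤ C`. -/
theorem stmt_3 {H : Type*} [NormedAddCommGroup H] [InnerProductSpace ℂ H]
    [CompleteSpace H] (A C : H →L[ℂ] H)
    (hA : A.IsPositive) (hC : C.IsPositive)
    (h : ContinuousLinearMap.IsPositive (C ^ 2 - A ^ 2)) :
    ContinuousLinearMap.IsPositive (C - A) := by
  rw [← ContinuousLinearMap.nonneg_iff_isPositive] at hA hC
  rw [← ContinuousLinearMap.le_def] at h ⊢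
  exact CStarAlgebra.le_of_sq_le_sq hA hC h
end

section
/- Let B₁,B₂,B₃ be bounded self-adjoint operators on a Hilbert space, M ≥ 0, and for P ∈ ℝ³ define K(P) := (Σⱼ (Pⱼ + Bⱼ)² + M²)^{1/2}, where Pⱼ + Bⱼ means Pⱼ·1 + Bⱼ. Then for all P, k ∈ ℝ³ the operator inequality K(P−k) ≥ K(P) − |k|·1 holds. -/
set_option linter.unusedSectionVars false

section AuxCStar
open scoped NNReal
variable {A : Type*} [CStarAlgebra A] [PartialOrder A] [StarOrderedRing A]

lemma my_sq_nonneg {a : A} (ha : IsSelfAdjoint a) : 0 ≤ a ^ 2 := by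
  rw [sq]; nth_rw 1 [← ha.star_eq]; exact star_mul_self_nonneg a

lemma my_ofReal_smul_one_selfAdjoint (r : ℝ) : IsSelfAdjoint ((r : ℂ) • (1 : A)) := by
  rw [IsSelfAdjoint, star_smul, star_one, Complex.star_def, Complex.conj_ofReal]

lemma my_smul_nonneg {r : ℝ} (hr : 0 ≤ r) {a : A} (ha : 0 ≤ a) : 0 ≤ (r : ℂ) • a := by
  have hs : ((Real.sqrt r : ℂ)) * ((Real.sqrt r : ℂ)) = (r : ℂ) := by
    rw [← Complex.ofReal_mul, Real.mul_self_sqrt hr]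
  have h : (r : ℂ) • a = star ((Real.sqrt r : ℂ) • (1 : A)) * a * ((Real.sqrt r : ℂ) • (1 : A)) := by
    rw [(my_ofReal_smul_one_selfAdjoint _).star_eq]
    rw [smul_mul_assoc, mul_smul_comm, one_mul, mul_one, smul_smul, hs]
  rw [h]; exact star_left_conjugate_nonneg ha _

lemma my_sqrt_eq_cfc_real {a : A} (ha : 0 ≤ a) : CFC.sqrt a = cfc Real.sqrt a := by
  refine CFC.sqrt_unique (a := a) (b := cfc Real.sqrt a) ?_ ?_
  · rw [← cfc_mul _ _ a (by fun_prop) (by fun_prop)]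
    conv_rhs => rw [← cfc_id ℝ a]
    exact cfc_congr fun x hx ↦ Real.mul_self_sqrt (spectrum_nonneg_of_nonneg ha hx)
  · exact cfc_nonneg fun x _ ↦ Real.sqrt_nonneg x

open CFC in
lemma my_sqrt_le_sqrt_of_isUnit {a b : A} (ha : 0 ≤ a) (hbu : IsUnit b)
    (hab : a ≤ b) : sqrt a ≤ sqrt b := by
  nontriviality A
  have hb : 0 ≤ b := ha.trans hab
  have h1 : ‖sqrt a * b ^ (-(1 / 2) : ℝ)‖ ≤ 1 :=
    (le_iff_norm_sqrt_mul_rpow a b ha (IsStrictlyPositive.iff_of_unital.mpr ⟨hb, hbu⟩)).mp hab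
  have h2 : sqrt b * sqrt b = b := sqrt_mul_sqrt_self b
  have hcomm : Commute (sqrt b) b := by
    conv_rhs => rw [← h2]
    exact (Commute.refl _).mul_right (Commute.refl _)
  have hsbu : IsUnit (sqrt b) := by
    rcases hbu with ⟨u, rfl⟩
    have hc : Commute (sqrt (u : A)) ↑u⁻¹ := hcomm.units_inv_right
    refine isUnit_iff_exists.mpr ⟨sqrt (u:A) * ↑u⁻¹, ?_, ?_⟩
    · rw [← mul_assoc, h2, u.mul_inv]
    · rw [mul_assoc, ← hc.eq, ← mul_assoc, h2, u.mul_inv]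
  rw [le_iff_norm_sqrt_mul_rpow (sqrt a) (sqrt b) (sqrt_nonneg a) (IsStrictlyPositive.iff_of_unital.mpr ⟨sqrt_nonneg b, hsbu⟩)]
  have h0b : (0 : ℝ≥0) ∉ spectrum ℝ≥0 b := spectrum.zero_notMem ℝ≥0 hbu
  have h0sb : (0 : ℝ≥0) ∉ spectrum ℝ≥0 (sqrt b) := spectrum.zero_notMem ℝ≥0 hsbu
  set x := sqrt (sqrt a) with hxdef
  set y := (sqrt b) ^ (-(1/2) : ℝ) with hydef
  have hy : (0 : A) ≤ y := rpow_nonneg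
  have hx : (0 : A) ≤ x := sqrt_nonneg _
  have hxx : x * x = sqrt a := sqrt_mul_sqrt_self _ (sqrt_nonneg _)
  have hyy : y * y = b ^ (-(1/2) : ℝ) := by
    rw [hydef, ← rpow_add hsbu]
    rw [show (-(1/2) + -(1/2) : ℝ) = -1 by norm_num, rpow_sqrt b (-1) hbu]
    norm_num
  set p := y * sqrt a * y with hpdef
  have hp : 0 ≤ p := conjugate_nonneg_of_nonneg (sqrt_nonneg _) hy
  have key : ‖x * y‖ ^ 2 = ‖p‖ := by
    rw [sq, ← CStarRing.norm_star_mul_self, star_mul,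
      (IsSelfAdjoint.of_nonneg hx).star_eq, (IsSelfAdjoint.of_nonneg hy).star_eq]
    congr 1
    rw [hpdef, mul_assoc, ← mul_assoc x, hxx, ← mul_assoc]
  have hspec : spectrum ℝ p \ {0} = spectrum ℝ (sqrt a * b ^ (-(1/2) : ℝ)) \ {0} := by
    rw [hpdef, mul_assoc, spectrum.nonzero_mul_comm, mul_assoc, hyy]
  have hnorm : ‖p‖ ≤ 1 := by
    rcases eq_or_ne ‖p‖ 0 with h0 | h0
    · rw [h0]; norm_num
    · have hmem : ‖p‖ ∈ spectrum ℝ p \ {0} :=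
        ⟨CStarAlgebra.norm_mem_spectrum_of_nonneg hp, h0⟩
      rw [hspec] at hmem
      calc ‖p‖ = ‖(‖p‖)‖ := (Real.norm_of_nonneg (norm_nonneg p)).symm
        _ ≤ ‖sqrt a * b ^ (-(1/2) : ℝ)‖ := spectrum.norm_le_norm_of_mem hmem.1
        _ ≤ 1 := h1
  rw [← sq_le_one_iff₀ (norm_nonneg (x * y)), key]
  exact hnorm

open CFC in
lemma my_sqrt_le_sqrt {a b : A} (ha : 0 ≤ a) (hab : a ≤ b) : sqrt a ≤ sqrt b := by
  have hb : 0 ≤ b := ha.trans hab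
  have halg : ∀ r : ℝ, algebraMap ℝ A r = (r : ℂ) • (1 : A) := by
    intro r
    rw [IsScalarTower.algebraMap_apply ℝ ℂ A, Algebra.algebraMap_eq_smul_one, Complex.coe_algebraMap]
  have key : ∀ ε : ℝ, 0 < ε → sqrt a ≤ sqrt b + (Real.sqrt ε : ℂ) • 1 := by
    intro ε hε
    have hε1 : (0 : A) ≤ (ε : ℂ) • 1 := my_smul_nonneg hε.le zero_le_one
    have h1 : a ≤ b + (ε : ℂ) • (1 : A) := hab.trans (le_add_of_nonneg_right hε1)
    have hbe : (0 : A) ≤ b + (ε : ℂ) • 1 := hb.trans (le_add_of_nonneg_right hε1)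
    have huε : IsUnit ((ε : ℂ) • (1 : A)) := by
      have hne : (ε : ℂ) ≠ 0 := by exact_mod_cast hε.ne'
      refine isUnit_iff_exists.mpr ⟨(ε : ℂ)⁻¹ • 1, ?_, ?_⟩
      · rw [smul_mul_smul_comm, one_mul, mul_inv_cancel₀ hne, one_smul]
      · rw [smul_mul_smul_comm, one_mul, inv_mul_cancel₀ hne, one_smul]
    have hu : IsUnit (b + (ε : ℂ) • (1 : A)) :=
      CStarAlgebra.isUnit_of_le _ (le_add_of_nonneg_left hb) (IsStrictlyPositive.iff_of_unital.mpr ⟨hε1, huε⟩)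
    refine (my_sqrt_le_sqrt_of_isUnit ha hu h1).trans ?_
    have e1 : b + (ε : ℂ) • (1 : A) = cfc (fun t : ℝ => t + ε) b := by
      rw [cfc_add b _ _ (by fun_prop) (by fun_prop), cfc_id' ℝ b, cfc_const ε b, halg]
    have e2 : sqrt (b + (ε : ℂ) • (1 : A)) = cfc (fun t : ℝ => Real.sqrt (t + ε)) b := by
      rw [my_sqrt_eq_cfc_real hbe, e1, ← cfc_comp' Real.sqrt (· + ε) b (by fun_prop)]
    rw [e2]
    have e3 : cfc (fun t : ℝ => Real.sqrt t + Real.sqrt ε) b = sqrt b + (Real.sqrt ε : ℂ) • 1 := by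
      rw [cfc_add b _ _ (by fun_prop) (by fun_prop), cfc_const _ b, halg,
        ← my_sqrt_eq_cfc_real hb]
    rw [← e3]
    refine cfc_mono fun t ht => ?_
    have ht0 : 0 ≤ t := spectrum_nonneg_of_nonneg hb ht
    have h4 : t + ε ≤ (Real.sqrt t + Real.sqrt ε) ^ 2 := by
      have h5 := Real.sq_sqrt ht0
      have h6 := Real.sq_sqrt hε.le
      have h7 := Real.sqrt_nonneg t
      have h8 := Real.sqrt_nonneg ε
      nlinarith
    calc Real.sqrt (t + ε) ≤ Real.sqrt ((Real.sqrt t + Real.sqrt ε) ^ 2) := Real.sqrt_le_sqrt h4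
      _ = Real.sqrt t + Real.sqrt ε := Real.sqrt_sq (by positivity)
  have hcont : Continuous fun ε : ℝ => sqrt b + (Real.sqrt ε : ℂ) • (1 : A) :=
    continuous_const.add ((Complex.continuous_ofReal.comp Real.continuous_sqrt).smul
      continuous_const)
  have htend : Filter.Tendsto (fun ε : ℝ => sqrt b + (Real.sqrt ε : ℂ) • (1 : A))
      (nhdsWithin 0 (Set.Ioi 0)) (nhds (sqrt b)) := by
    have h := (hcont.tendsto 0).mono_left (nhdsWithin_le_nhds (s := Set.Ioi (0:ℝ)))
    simpa using h
  exact ge_of_tendsto htend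
    (Filter.eventually_mem_set.mpr self_mem_nhdsWithin |>.mono fun ε hε => key ε hε)

open CFC in
lemma my_le_of_sq_le_sq {t c : A} (ht : IsSelfAdjoint t) (hc : 0 ≤ c) (h : t ^ 2 ≤ c ^ 2) :
    t ≤ c := by
  have hposneg : t⁺ * t⁻ = 0 := CFC.posPart_mul_negPart t
  have hnegpos : t⁻ * t⁺ = 0 := CFC.negPart_mul_posPart t
  have hsplit : t⁺ - t⁻ = t := CFC.posPart_sub_negPart t
  have hp : (0 : A) ≤ t⁺ := CFC.posPart_nonneg t
  have hn : (0 : A) ≤ t⁻ := CFC.negPart_nonneg t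
  have hsq : (t⁺) ^ 2 ≤ t ^ 2 := by
    have hexp : t ^ 2 = (t⁺) ^ 2 + (t⁻) ^ 2 := by
      conv_lhs => rw [← hsplit]
      simp only [sq, mul_sub, sub_mul, hposneg, hnegpos]
      abel
    rw [hexp]
    exact le_add_of_nonneg_right (my_sq_nonneg (IsSelfAdjoint.of_nonneg hn))
  have h3 : t⁺ ≤ c := by
    have h4 := my_sqrt_le_sqrt (my_sq_nonneg (IsSelfAdjoint.of_nonneg hp)) (hsq.trans h)
    rwa [CFC.sqrt_sq _ hp, CFC.sqrt_sq _ hc] at h4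
  calc t = t⁺ - t⁻ := hsplit.symm
    _ ≤ t⁺ := sub_le_self _ hn
    _ ≤ c := h3

lemma my_smul_selfAdjoint {A : Type*} [CStarAlgebra A] (r : ℝ) {x : A} (hx : IsSelfAdjoint x) :
    IsSelfAdjoint ((r : ℂ) • x) := by
  rw [IsSelfAdjoint, star_smul, hx.star_eq, Complex.star_def, Complex.conj_ofReal]

end AuxCStar

/-- Let `B₁,B₂,B₃` be bounded self-adjoint operators, `M ≥ 0`, and for `P ∈ ℝ³` let
`K P` be the positive square root of `∑ⱼ (Pⱼ·1 + Bⱼ)² + M²·1`. Then for all `P, k ∈ ℝ³`,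
`K (P - k) ≥ K P - |k|·1` in the Loewner order. -/
theorem stmt_5 {H : Type*} [NormedAddCommGroup H] [InnerProductSpace ℂ H]
    [CompleteSpace H] (B : Fin 3 → (H →L[ℂ] H)) (hB : ∀ j, IsSelfAdjoint (B j))
    (M : ℝ) (hM : 0 ≤ M) (K : (Fin 3 → ℝ) → (H →L[ℂ] H))
    (hKpos : ∀ P, (K P).IsPositive)
    (hKsq : ∀ P : Fin 3 → ℝ, (K P) ^ 2 =
      (∑ j, ((P j : ℂ) • (1 : H →L[ℂ] H) + B j) ^ 2)
        + ((M ^ 2 : ℝ) : ℂ) • (1 : H →L[ℂ] H)) :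
    ∀ P k : Fin 3 → ℝ,
      ContinuousLinearMap.IsPositive
        (K (P - k) - (K P - ((Real.sqrt (∑ j, (k j) ^ 2) : ℝ) : ℂ) • 1)) := by
  intro P k
  set c : ℝ := Real.sqrt (∑ j, (k j) ^ 2) with hcdef
  have hknn : (0:ℝ) ≤ ∑ j, (k j)^2 := Finset.sum_nonneg fun j _ => sq_nonneg _
  have hc : 0 ≤ c := Real.sqrt_nonneg _
  have hc2 : c ^ 2 = ∑ j, (k j)^2 := Real.sq_sqrt hknn
  set Aop : Fin 3 → (H →L[ℂ] H) := fun j => (P j : ℂ) • 1 + B j with hAdef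
  have hAsa : ∀ j, IsSelfAdjoint (Aop j) := fun j =>
    (my_ofReal_smul_one_selfAdjoint (P j)).add (hB j)
  set S : H →L[ℂ] H := ∑ j, (k j : ℂ) • Aop j with hSdef
  have hSsa : IsSelfAdjoint S := by
    rw [hSdef, IsSelfAdjoint, star_sum]
    exact Finset.sum_congr rfl fun j _ => (my_smul_selfAdjoint (k j) (hAsa j)).star_eq
  have expand : ∀ (X : H →L[ℂ] H) (r : ℝ), (X - (r:ℂ) • 1) ^ 2
      = X ^ 2 - ((2*r : ℝ):ℂ) • X + ((r^2 : ℝ):ℂ) • 1 := by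
    intro X r
    push_cast
    simp only [sq, mul_sub, sub_mul, smul_mul_assoc, mul_smul_comm, smul_smul, mul_one, one_mul,
      smul_sub, sub_smul, two_mul, add_smul]
    abel
  -- Step 1 : K (P-k)^2 = K P^2 - 2•S + c²•1
  have hKPk : K (P - k) ^ 2 = K P ^ 2 - (2:ℂ) • S + ((c^2 : ℝ):ℂ) • 1 := by
    rw [hKsq, hKsq]
    have hterm : ∀ j, ((((P - k) j : ℝ) : ℂ) • (1 : H →L[ℂ] H) + B j) ^ 2
        = (Aop j) ^ 2 - ((2 * k j : ℝ):ℂ) • Aop j + ((k j ^ 2 : ℝ):ℂ) • 1 := by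
      intro j
      rw [← expand (Aop j) (k j)]
      congr 1
      rw [hAdef]
      simp only [Pi.sub_apply, Complex.ofReal_sub, sub_smul]
      abel
    simp only [hterm]
    rw [Finset.sum_add_distrib, Finset.sum_sub_distrib]
    have e1 : ∑ j, ((2 * k j : ℝ):ℂ) • Aop j = (2:ℂ) • S := by
      rw [hSdef, Finset.smul_sum]
      refine Finset.sum_congr rfl fun j _ => ?_
      rw [smul_smul]
      norm_num
    have e2 : ∑ j : Fin 3, ((k j ^ 2 : ℝ):ℂ) • (1 : H →L[ℂ] H) = ((c^2 : ℝ):ℂ) • 1 := by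
      rw [← Finset.sum_smul, hc2]
      norm_cast
    rw [e1, e2]
    abel
  -- Step 2 : Cauchy-Schwarz : S² ≤ c² • (K P)²
  have hsum_le : (∑ j, (Aop j) ^ 2) ≤ K P ^ 2 := by
    rw [hKsq]
    exact le_add_of_nonneg_right (my_smul_nonneg (sq_nonneg M) zero_le_one)
  have hCS : S^2 ≤ ((c^2 : ℝ):ℂ) • (K P)^2 := by
    have hterm : ∀ i j : Fin 3, ((k j:ℂ) • Aop i - (k i:ℂ) • Aop j)^2
        = ((k j ^ 2 : ℝ):ℂ) • (Aop i * Aop i) + ((k i ^ 2 : ℝ):ℂ) • (Aop j * Aop j)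
          - (((k i:ℂ) * (k j:ℂ)) • (Aop i * Aop j) + ((k i:ℂ) * (k j:ℂ)) • (Aop j * Aop i)) := by
      intro i j
      push_cast
      simp only [sq, sub_mul, mul_sub, smul_mul_assoc, mul_smul_comm, smul_smul, smul_sub,
        sub_smul]
      rw [mul_comm ((k j : ℂ)) ((k i : ℂ))]
      abel
    have hsum0 : (0 : H →L[ℂ] H) ≤ ∑ i, ∑ j, ((k j:ℂ) • Aop i - (k i:ℂ) • Aop j)^2 :=
      Finset.sum_nonneg fun i _ => Finset.sum_nonneg fun j _ =>
        my_sq_nonneg ((my_smul_selfAdjoint (k j) (hAsa i)).sub (my_smul_selfAdjoint (k i) (hAsa j)))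
    have hS2 : S ^ 2 = ∑ i, ∑ j, ((k i:ℂ) * (k j:ℂ)) • (Aop i * Aop j) := by
      rw [sq, hSdef, Finset.sum_mul_sum]
      exact Finset.sum_congr rfl fun i _ => Finset.sum_congr rfl fun j _ =>
        smul_mul_smul_comm _ _ _ _
    have hE1 : ∑ i, ∑ j, ((k j ^ 2 : ℝ):ℂ) • (Aop i * Aop i)
        = ((∑ j, (k j)^2 : ℝ):ℂ) • ∑ i, (Aop i * Aop i) := by
      rw [Finset.smul_sum]
      refine Finset.sum_congr rfl fun i _ => ?_
      rw [← Finset.sum_smul]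
      norm_cast
    have hE2 : ∑ i : Fin 3, ∑ j : Fin 3, ((k i ^ 2 : ℝ):ℂ) • (Aop j * Aop j)
        = ((∑ j, (k j)^2 : ℝ):ℂ) • ∑ i, (Aop i * Aop i) := by
      rw [Finset.sum_comm]
      exact hE1
    have hE4 : ∑ i, ∑ j, ((k i:ℂ) * (k j:ℂ)) • (Aop j * Aop i) = S ^ 2 := by
      rw [hS2, Finset.sum_comm]
      exact Finset.sum_congr rfl fun i _ => Finset.sum_congr rfl fun j _ => by
        rw [mul_comm ((k i : ℂ))]
    have hid : ∑ i, ∑ j, ((k j:ℂ) • Aop i - (k i:ℂ) • Aop j)^2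
        = (2:ℂ) • (((∑ j, (k j)^2 : ℝ):ℂ) • (∑ i, (Aop i * Aop i)) - S^2) := by
      simp only [hterm, Finset.sum_sub_distrib, Finset.sum_add_distrib]
      rw [hE1, hE2, hE4, ← hS2, two_smul]
      abel
    rw [hid] at hsum0
    have hW : (0 : H →L[ℂ] H) ≤ ((∑ j, (k j)^2 : ℝ):ℂ) • (∑ i, (Aop i * Aop i)) - S^2 := by
      have h12 := my_smul_nonneg (by norm_num : (0:ℝ) ≤ 1/2) hsum0
      rw [smul_smul, show (((1/2 : ℝ)):ℂ) * 2 = 1 by norm_num, one_smul] at h12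
      exact h12
    have h5 : S^2 ≤ ((∑ j, (k j)^2 : ℝ):ℂ) • (∑ i, (Aop i * Aop i)) := sub_nonneg.mp hW
    have h6 : ((∑ j, (k j)^2 : ℝ):ℂ) • (∑ i, (Aop i * Aop i)) ≤ ((c^2 : ℝ):ℂ) • (K P)^2 := by
      rw [hc2]
      have h7 : (∑ i, (Aop i * Aop i)) ≤ (K P)^2 := by
        simpa only [sq] using hsum_le
      have := my_smul_nonneg hknn (sub_nonneg.mpr h7)
      rw [smul_sub] at this
      exact sub_nonneg.mp this
    exact h5.trans h6
  -- Step 3 : S ≤ c • K P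
  have hKP0 : (0 : H →L[ℂ] H) ≤ K P := (ContinuousLinearMap.nonneg_iff_isPositive _).mpr (hKpos P)
  have hS_le : S ≤ (c:ℂ) • K P := by
    refine my_le_of_sq_le_sq hSsa (my_smul_nonneg hc hKP0) ?_
    rw [smul_pow]
    calc S^2 ≤ ((c^2 : ℝ):ℂ) • (K P)^2 := hCS
      _ = (c:ℂ)^2 • (K P)^2 := by norm_cast
  -- Step 4 : (K P - c•1)² ≤ K (P-k)²
  have hsq_le : (K P - (c:ℂ) • 1)^2 ≤ (K (P - k))^2 := by
    rw [expand (K P) c, hKPk, ← sub_nonneg]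
    have h8 : (0 : H →L[ℂ] H) ≤ (2:ℂ) • ((c:ℂ) • K P - S) := by
      have h := my_smul_nonneg (by norm_num : (0:ℝ) ≤ 2) (sub_nonneg.mpr hS_le)
      rwa [show ((2:ℝ):ℂ) = (2:ℂ) by norm_num] at h
    convert h8 using 1
    rw [smul_sub]
    have h9 : ((2*c : ℝ):ℂ) • K P = (2:ℂ) • ((c:ℂ) • K P) := by
      rw [smul_smul]
      norm_cast
    rw [h9]
    abel
  have hfinal : K P - (c:ℂ) • 1 ≤ K (P - k) := by
    refine my_le_of_sq_le_sq ?_ ((ContinuousLinearMap.nonneg_iff_isPositive _).mpr (hKpos _)) hsq_le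
    exact (hKpos P).isSelfAdjoint.sub (my_ofReal_smul_one_selfAdjoint c)
  exact (ContinuousLinearMap.le_def _ _).mp hfinal
end

section
/- Let B₁,B₂,B₃ be Hermitian n×n matrices, M > 0, and for P ∈ ℝ³ define K(P) := (Σⱼ(Pⱼ I + Bⱼ)² + M² I)^{1/2} (positive semidefinite square root) and E(P) := λ_min(K(P)) the smallest eigenvalue. Then for all P, k ∈ ℝ³: E(P−k) − E(P) + |k| ≥ 0. -/
/-!
Let `ψ` be a unit ground state of `K(P - k)`, so `K(P - k) ψ = E(P - k) ψ` with `E(P - k) ≥ 0`.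
Since `K(P)` is Hermitian with `K(P)² = ∑ⱼ Yⱼ² + M²` for the Hermitian `Yⱼ = Pⱼ + Bⱼ`,
`‖K(P) ψ‖² = ∑ⱼ ‖Yⱼ ψ‖² + M² ‖ψ‖²`. Passing from `P - k` to `P` adds `(kⱼ ψ)ⱼ` to the vector
`(Yⱼ ψ)ⱼ`, whose `ℓ²` norm is `|k|`, so the triangle inequality gives
`‖K(P) ψ‖ ≤ ‖K(P - k) ψ‖ + |k| = E(P - k) + |k|`. Finally `E(P) ≤ ⟨ψ, K(P) ψ⟩ ≤ ‖K(P) ψ‖`.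
-/

open scoped ComplexOrder Classical

/-- The positive semidefinite square root of a matrix (junk value `0` if the matrix
is not positive semidefinite). -/

noncomputable def matSqrt {n : ℕ} (A : Matrix (Fin n) (Fin n) ℂ) :
    Matrix (Fin n) (Fin n) ℂ :=
  if h : A.PosSemidef then
    h.1.eigenvectorUnitary.1 * Matrix.diagonal ((↑) ∘ (√·) ∘ h.1.eigenvalues) *
      (star h.1.eigenvectorUnitary : Matrix (Fin n) (Fin n) ℂ)
  else 0

/-- The smallest eigenvalue of a Hermitian matrix (junk value `0` otherwise). -/
noncomputable def lamMin {n : ℕ} (A : Matrix (Fin n) (Fin n) ℂ) : ℝ :=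
  if h : A.IsHermitian then ⨅ i, h.eigenvalues i else 0

open Matrix
open scoped MatrixOrder InnerProductSpace

section Hermitian

variable {𝕜 : Type*} [RCLike 𝕜] {ι : Type*} [Fintype ι] [DecidableEq ι] {A : Matrix ι ι 𝕜}

lemma Matrix.IsHermitian.toEuclideanLin_eigenvectorBasis (hA : A.IsHermitian) (i : ι) :
    toEuclideanLin A (hA.eigenvectorBasis i) = (hA.eigenvalues i : 𝕜) • hA.eigenvectorBasis i :=
  WithLp.ofLp_injective 2 <| by
    rw [ofLp_toLpLin, WithLp.ofLp_smul, ← RCLike.real_smul_eq_coe_smul]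
    exact hA.mulVec_eigenvectorBasis i

lemma Matrix.IsHermitian.iInf_eigenvalues_mul_norm_sq_le (hA : A.IsHermitian)
    (ψ : EuclideanSpace 𝕜 ι) :
    (⨅ i, hA.eigenvalues i) * ‖ψ‖ ^ 2 ≤ RCLike.re ⟪ψ, toEuclideanLin A ψ⟫_𝕜 := by
  set b := hA.eigenvectorBasis
  have hT := isSymmetric_toEuclideanLin_iff.mpr hA
  have expand :
      RCLike.re ⟪ψ, toEuclideanLin A ψ⟫_𝕜 = ∑ i, hA.eigenvalues i * ‖⟪b i, ψ⟫_𝕜‖ ^ 2 := by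
    rw [← b.sum_inner_mul_inner, map_sum]
    refine Finset.sum_congr rfl fun i _ => ?_
    rw [← hT, hA.toEuclideanLin_eigenvectorBasis, inner_smul_left, RCLike.conj_ofReal,
      mul_left_comm, RCLike.re_ofReal_mul, ← inner_conj_symm ψ, RCLike.conj_mul]
    norm_cast
  calc (⨅ i, hA.eigenvalues i) * ‖ψ‖ ^ 2
      = ∑ i, (⨅ j, hA.eigenvalues j) * ‖⟪b i, ψ⟫_𝕜‖ ^ 2 := by
        rw [← Finset.mul_sum, b.sum_sq_norm_inner_right]
    _ ≤ ∑ i, hA.eigenvalues i * ‖⟪b i, ψ⟫_𝕜‖ ^ 2 := by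
        gcongr with i
        exact ciInf_le (Finite.bddBelow_range _) i
    _ = _ := expand.symm

lemma Matrix.IsHermitian.norm_sq_toEuclideanLin (hA : A.IsHermitian) (ψ : EuclideanSpace 𝕜 ι) :
    ‖toEuclideanLin A ψ‖ ^ 2 = RCLike.re ⟪ψ, toEuclideanLin (A ^ 2) ψ⟫_𝕜 := by
  rw [toLpLin_pow, sq (toLpLin 2 2 A), Module.End.mul_apply,
    ← isSymmetric_toEuclideanLin_iff.mpr hA, inner_self_eq_norm_sq_to_K]
  norm_cast

end Hermitian

lemma Real.sqrt_add_le_sqrt_add_of_sqrt_le {s a t b : ℝ} (ha : 0 ≤ a) (ht : 0 ≤ t) (hb : 0 ≤ b)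
    (h : √s ≤ √a + b) : √(s + t) ≤ √(a + t) + b := by
  have hsa : √a ≤ √(a + t) := Real.sqrt_le_sqrt (by linarith)
  have hs : s ≤ (√a + b) ^ 2 := (Real.sqrt_le_iff.mp h).2
  rw [Real.sqrt_le_iff]
  refine ⟨by positivity, ?_⟩
  nlinarith [Real.sq_sqrt ha, Real.sq_sqrt (add_nonneg ha ht), Real.sqrt_nonneg a]

lemma sqrt_sum_norm_add_smul_sq_le {ι E : Type*} [Fintype ι] [SeminormedAddCommGroup E]
    [NormedSpace ℝ E] (u : ι → E) (k : ι → ℝ) (v : E) {c : ℝ} (hc : 0 ≤ c) :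
    √(∑ j, ‖u j + k j • v‖ ^ 2 + c * ‖v‖ ^ 2) ≤
      √(∑ j, ‖u j‖ ^ 2 + c * ‖v‖ ^ 2) + √(∑ j, k j ^ 2) * ‖v‖ := by
  have h := norm_add_le (WithLp.toLp 2 u : PiLp 2 fun _ : ι => E) (WithLp.toLp 2 fun j => k j • v)
  rw [← WithLp.toLp_add, PiLp.norm_eq_of_L2, PiLp.norm_eq_of_L2, PiLp.norm_eq_of_L2] at h
  simp only [Pi.add_apply, norm_smul, mul_pow, Real.norm_eq_abs, sq_abs, ← Finset.sum_mul,
    Real.sqrt_mul' _ (sq_nonneg ‖v‖), Real.sqrt_sq (norm_nonneg v)] at h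
  exact Real.sqrt_add_le_sqrt_add_of_sqrt_le (by positivity) (by positivity) (by positivity) h

section LamMin

variable {n : ℕ} {A : Matrix (Fin n) (Fin n) ℂ}

lemma matSqrt_eq_sqrt (hA : A.PosSemidef) : matSqrt A = CFC.sqrt A := by
  rw [matSqrt, dif_pos hA, CFC.sqrt_eq_real_sqrt A hA.nonneg, cfcₙ_eq_cfc, hA.1.cfc_eq]
  rfl

lemma posSemidef_matSqrt (hA : A.PosSemidef) : (matSqrt A).PosSemidef :=
  matSqrt_eq_sqrt hA ▸ (CFC.sqrt_nonneg A).posSemidef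

lemma matSqrt_sq (hA : A.PosSemidef) : matSqrt A ^ 2 = A :=
  matSqrt_eq_sqrt hA ▸ CFC.sq_sqrt A hA.nonneg

lemma lamMin_nonneg (hA : A.PosSemidef) : 0 ≤ lamMin A := by
  rw [lamMin, dif_pos hA.1]
  exact Real.iInf_nonneg hA.eigenvalues_nonneg

lemma lamMin_le_norm_toEuclideanLin (hA : A.IsHermitian) {ψ : EuclideanSpace ℂ (Fin n)}
    (hψ : ‖ψ‖ = 1) : lamMin A ≤ ‖toEuclideanLin A ψ‖ := by
  rw [lamMin, dif_pos hA]
  calc (⨅ i, hA.eigenvalues i) = (⨅ i, hA.eigenvalues i) * ‖ψ‖ ^ 2 := by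
        rw [hψ, one_pow, mul_one]
    _ ≤ RCLike.re ⟪ψ, toEuclideanLin A ψ⟫_ℂ := hA.iInf_eigenvalues_mul_norm_sq_le ψ
    _ ≤ ‖ψ‖ * ‖toEuclideanLin A ψ‖ := re_inner_le_norm _ _
    _ = ‖toEuclideanLin A ψ‖ := by rw [hψ, one_mul]

lemma exists_norm_eq_one_toEuclideanLin_eq_lamMin [NeZero n] (hA : A.IsHermitian) :
    ∃ ψ : EuclideanSpace ℂ (Fin n), ‖ψ‖ = 1 ∧ toEuclideanLin A ψ = (lamMin A : ℂ) • ψ := by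
  obtain ⟨i, hi⟩ := exists_eq_ciInf_of_finite (f := hA.eigenvalues)
  refine ⟨hA.eigenvectorBasis i, hA.eigenvectorBasis.orthonormal.1 i, ?_⟩
  rw [lamMin, dif_pos hA, ← hi, hA.toEuclideanLin_eigenvectorBasis]
  rfl

end LamMin

section Kinetic

variable {n : ℕ} {ι : Type*} [Fintype ι]

/-- `K(P)²` of the paper, with `c = M²`. -/
noncomputable def kineticSq (B : ι → Matrix (Fin n) (Fin n) ℂ) (c : ℝ) (P : ι → ℝ) :
    Matrix (Fin n) (Fin n) ℂ :=
  ∑ j, ((P j : ℂ) • (1 : Matrix (Fin n) (Fin n) ℂ) + B j) ^ 2 + (c : ℂ) • 1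

lemma Matrix.IsHermitian.real_smul_one_add {X : Matrix (Fin n) (Fin n) ℂ} (hX : X.IsHermitian)
    (x : ℝ) : ((x : ℂ) • (1 : Matrix (Fin n) (Fin n) ℂ) + X).IsHermitian :=
  (isHermitian_one.smul (Complex.conj_ofReal x)).add hX

lemma kineticSq_posSemidef {B : ι → Matrix (Fin n) (Fin n) ℂ} (hB : ∀ j, (B j).IsHermitian)
    {c : ℝ} (hc : 0 ≤ c) (P : ι → ℝ) : (kineticSq B c P).PosSemidef := by
  have hc' : (0 : ℂ) ≤ c := Complex.zero_le_real.mpr hc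
  refine .add (posSemidef_sum _ fun j _ => ?_) (PosSemidef.one.smul hc')
  have hX := (hB j).real_smul_one_add (P j)
  have := posSemidef_conjTranspose_mul_self ((P j : ℂ) • (1 : Matrix (Fin n) (Fin n) ℂ) + B j)
  rwa [hX.eq, ← pow_two] at this

lemma norm_sq_toEuclideanLin_of_sq_eq_kineticSq {K : Matrix (Fin n) (Fin n) ℂ}
    (hK : K.IsHermitian) {B : ι → Matrix (Fin n) (Fin n) ℂ} (hB : ∀ j, (B j).IsHermitian)
    {c : ℝ} {P : ι → ℝ} (hKsq : K ^ 2 = kineticSq B c P) (ψ : EuclideanSpace ℂ (Fin n)) :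
    ‖toEuclideanLin K ψ‖ ^ 2 =
      ∑ j, ‖toEuclideanLin ((P j : ℂ) • (1 : Matrix (Fin n) (Fin n) ℂ) + B j) ψ‖ ^ 2 +
        c * ‖ψ‖ ^ 2 := by
  rw [hK.norm_sq_toEuclideanLin, hKsq, kineticSq, map_add, LinearMap.add_apply, inner_add_right,
    map_add, map_sum, LinearMap.sum_apply, inner_sum, map_sum, map_smul, toLpLin_one,
    LinearMap.smul_apply, LinearMap.id_apply, inner_smul_right, inner_self_eq_norm_sq_to_K]
  congr 1
  · exact Finset.sum_congr rfl fun j _ =>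
      (((hB j).real_smul_one_add (P j)).norm_sq_toEuclideanLin ψ).symm
  · simp [← Complex.ofReal_pow]

lemma toEuclideanLin_real_smul_one_add_apply (X : Matrix (Fin n) (Fin n) ℂ) (x y : ℝ)
    (ψ : EuclideanSpace ℂ (Fin n)) :
    toEuclideanLin ((x : ℂ) • (1 : Matrix (Fin n) (Fin n) ℂ) + X) ψ =
      toEuclideanLin (((x - y : ℝ) : ℂ) • (1 : Matrix (Fin n) (Fin n) ℂ) + X) ψ + y • ψ := by
  have hsplit : (x : ℂ) • (1 : Matrix (Fin n) (Fin n) ℂ) + X =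
      (((x - y : ℝ) : ℂ) • (1 : Matrix (Fin n) (Fin n) ℂ) + X) + (y : ℂ) • 1 := by
    rw [Complex.ofReal_sub, sub_smul]
    abel
  rw [hsplit, map_add, LinearMap.add_apply, map_smul, toLpLin_one, LinearMap.smul_apply,
    LinearMap.id_apply]
  exact congrArg (_ + ·) (Complex.coe_smul y ψ)

lemma norm_toEuclideanLin_le_of_sq_eq_kineticSq {K K' : Matrix (Fin n) (Fin n) ℂ}
    (hK : K.IsHermitian) (hK' : K'.IsHermitian) {B : ι → Matrix (Fin n) (Fin n) ℂ}
    (hB : ∀ j, (B j).IsHermitian) {c : ℝ} (hc : 0 ≤ c) {P k : ι → ℝ}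
    (hKsq : K ^ 2 = kineticSq B c P) (hK'sq : K' ^ 2 = kineticSq B c (P - k))
    (ψ : EuclideanSpace ℂ (Fin n)) :
    ‖toEuclideanLin K ψ‖ ≤ ‖toEuclideanLin K' ψ‖ + √(∑ j, k j ^ 2) * ‖ψ‖ := by
  rw [← Real.sqrt_sq (norm_nonneg (toEuclideanLin K ψ)),
    ← Real.sqrt_sq (norm_nonneg (toEuclideanLin K' ψ)),
    norm_sq_toEuclideanLin_of_sq_eq_kineticSq hK hB hKsq,
    norm_sq_toEuclideanLin_of_sq_eq_kineticSq hK' hB hK'sq]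
  have hshift : ∀ j, toEuclideanLin ((P j : ℂ) • (1 : Matrix (Fin n) (Fin n) ℂ) + B j) ψ =
      toEuclideanLin (((P - k) j : ℂ) • (1 : Matrix (Fin n) (Fin n) ℂ) + B j) ψ + k j • ψ :=
    fun j => toEuclideanLin_real_smul_one_add_apply (B j) (P j) (k j) ψ
  simp_rw [hshift]
  exact sqrt_sum_norm_add_smul_sq_le _ k ψ hc

lemma lamMin_matSqrt_kineticSq_le [NeZero n] {B : ι → Matrix (Fin n) (Fin n) ℂ}
    (hB : ∀ j, (B j).IsHermitian) {c : ℝ} (hc : 0 ≤ c) (P k : ι → ℝ) :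
    lamMin (matSqrt (kineticSq B c P)) ≤
      lamMin (matSqrt (kineticSq B c (P - k))) + √(∑ j, k j ^ 2) := by
  have hK : ∀ Q, (matSqrt (kineticSq B c Q)).PosSemidef :=
    fun Q => posSemidef_matSqrt (kineticSq_posSemidef hB hc Q)
  have hKsq : ∀ Q, matSqrt (kineticSq B c Q) ^ 2 = kineticSq B c Q :=
    fun Q => matSqrt_sq (kineticSq_posSemidef hB hc Q)
  obtain ⟨ψ, hψ, hKψ⟩ := exists_norm_eq_one_toEuclideanLin_eq_lamMin (hK (P - k)).1
  calc lamMin (matSqrt (kineticSq B c P))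
      ≤ ‖toEuclideanLin (matSqrt (kineticSq B c P)) ψ‖ :=
        lamMin_le_norm_toEuclideanLin (hK P).1 hψ
    _ ≤ ‖toEuclideanLin (matSqrt (kineticSq B c (P - k))) ψ‖ + √(∑ j, k j ^ 2) * ‖ψ‖ :=
        norm_toEuclideanLin_le_of_sq_eq_kineticSq (hK P).1 (hK (P - k)).1 hB hc (hKsq P)
          (hKsq (P - k)) ψ
    _ = lamMin (matSqrt (kineticSq B c (P - k))) + √(∑ j, k j ^ 2) := by
        rw [hKψ, norm_smul, hψ, Complex.norm_real, Real.norm_of_nonneg (lamMin_nonneg (hK _)),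
          mul_one, mul_one]

end Kinetic

theorem stmt_12_general {n : ℕ} (hn : 0 < n) (B : Fin 3 → Matrix (Fin n) (Fin n) ℂ)
    (hB : ∀ j, (B j).IsHermitian) (M : ℝ)
    (K : (Fin 3 → ℝ) → Matrix (Fin n) (Fin n) ℂ)
    (hK : ∀ P : Fin 3 → ℝ, K P = matSqrt
      ((∑ j, ((P j : ℂ) • (1 : Matrix (Fin n) (Fin n) ℂ) + B j) ^ 2)
        + ((M ^ 2 : ℝ) : ℂ) • (1 : Matrix (Fin n) (Fin n) ℂ)))
    (E : (Fin 3 → ℝ) → ℝ) (hE : ∀ P, E P = lamMin (K P)) :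
    ∀ P k : Fin 3 → ℝ, 0 ≤ E (P - k) - E P + Real.sqrt (∑ j, (k j) ^ 2) := by
  intro P k
  have : NeZero n := ⟨hn.ne'⟩
  have key := lamMin_matSqrt_kineticSq_le hB (sq_nonneg M) P k
  rw [hE, hE, hK, hK]
  unfold kineticSq at key
  linarith

/-- Finite-dimensional model of the main theorem: with
`K(P) := (∑ⱼ(PⱼI+Bⱼ)² + M²I)^{1/2}` and `E(P) := λ_min(K(P))`, one has
`E(P−k) − E(P) + |k| ≥ 0` for all `P, k ∈ ℝ³`. -/
theorem stmt_12 {n : ℕ} (hn : 0 < n) (B : Fin 3 → Matrix (Fin n) (Fin n) ℂ)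
    (hB : ∀ j, (B j).IsHermitian) (M : ℝ) (hM : 0 < M)
    (K : (Fin 3 → ℝ) → Matrix (Fin n) (Fin n) ℂ)
    (hK : ∀ P : Fin 3 → ℝ, K P = matSqrt
      ((∑ j, ((P j : ℂ) • (1 : Matrix (Fin n) (Fin n) ℂ) + B j) ^ 2)
        + ((M ^ 2 : ℝ) : ℂ) • (1 : Matrix (Fin n) (Fin n) ℂ)))
    (E : (Fin 3 → ℝ) → ℝ) (hE : ∀ P, E P = lamMin (K P)) :
    ∀ P k : Fin 3 → ℝ, 0 ≤ E (P - k) - E P + Real.sqrt (∑ j, (k j) ^ 2) :=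
  stmt_12_general hn B hB M K hK E hE
end
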